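/- Let E be the equivalence relation induced by a partition 𝒫 = {X_i : i ∈ I} of X, and let T_{E*}(X) = {f : X → X : for all x,y, (x,y) ∈ E ⟺ (f(x),f(y)) ∈ E}. Then f ∈ T_{E*}(X) is unit-regular in T_{E*}(X) if and only if (i) χ^(f) : I → I is surjective (hence, since χ^(f) is automatically injective for f ∈ T_{E*}(X), a permutation of I), and (ii) whenever χ^(f)(i) = j we have |X_i| = |X_j| and c(f_i) = d(f_i) for the induced block map f_i : X_i → X_j. -/

import Mathlib

/-- `B` is a partition of `X` into nonempty pairwise disjoint blocks. -/
def IsBlockPartition {X I : Type*} (B : I → Set X) : Prop :=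
  (∀ i, (B i).Nonempty) ∧ (∀ i j, i ≠ j → Disjoint (B i) (B j)) ∧ ∀ x, ∃ i, x ∈ B i

/-- `f` preserves the partition `B`: each block maps into some block. -/
def Preserves {X I : Type*} (B : I → Set X) (f : X → X) : Prop :=
  ∀ i, ∃ j, f '' B i ⊆ B j

/-- `f` is unit-regular in `T(X,𝒫)`: there is a unit `g` (a `𝒫`-preserving
bijection whose inverse preserves `𝒫`) with `fgf = f` (right-action
composition). -/
def URegP {X I : Type*} (B : I → Set X) (f : X → X) : Prop :=
  ∃ g : X ≃ X, Preserves B g ∧ Preserves B g.symm ∧ ∀ x, f (g (f x)) = f x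

/-- The induced block map `f_i : X_i → X_j` has collapse equal to defect:
for some cross-section `T` of its kernel, `|X_i \ T| = |X_j \ f(X_i)|`. -/
def BlockSemiBalanced {X I : Type*} (B : I → Set X) (f : X → X) (i j : I) : Prop :=
  ∃ T ⊆ B i, (∀ x ∈ B i, ∃! t, t ∈ T ∧ f t = f x) ∧
    Cardinal.mk ↥(B i \ T) = Cardinal.mk ↥(B j \ f '' B i)

/-! A unit `g` with `f ∘ g ∘ f = f` permutes the blocks, and comparing the blocks of `f x` and
`f (g (f x))` shows that this permutation inverts `χf`. Hence `g` maps `B (χf i)` bijectively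
onto `B i`, and `g '' (f '' B i)` is a cross-section `T` of the kernel of `f` on `B i` with
`B i \ T = g '' (B (χf i) \ f '' B i)`, which gives collapse = defect.

Conversely, a cross-section `T` and a bijection from the collapse `B i \ T` onto the defect
assemble into bijections `F i : B i ≃ B (χf i)` agreeing with `f` on `T`. As `χf` is a
permutation these glue to a unit `G` of `X`, and `G⁻¹ (f x)` lies in `T` with the same image
as `x`, so `f (G⁻¹ (f x)) = f x`. -/

open Function Set

namespace IsBlockPartition

variable {X I : Type*} {B : I → Set X}

theorem eq_of_mem (hP : IsBlockPartition B) {x : X} {i j : I} (hi : x ∈ B i) (hj : x ∈ B j) :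
    i = j :=
  by_contra fun hij => Set.disjoint_left.mp (hP.2.1 i j hij) hi hj

theorem existsUnique_mem (hP : IsBlockPartition B) (x : X) : ∃! i, x ∈ B i :=
  let ⟨i, hi⟩ := hP.2.2 x
  ⟨i, hi, fun _ hj => hP.eq_of_mem hj hi⟩

theorem injective_of_reflects (hP : IsBlockPartition B) {f : X → X} {χ : I → I}
    (hχ : ∀ i, f '' B i ⊆ B (χ i))
    (hE : ∀ x y, (∃ i, f x ∈ B i ∧ f y ∈ B i) → ∃ i, x ∈ B i ∧ y ∈ B i) :
    Injective χ := by
  intro i j hij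
  obtain ⟨x, hx⟩ := hP.1 i
  obtain ⟨y, hy⟩ := hP.1 j
  obtain ⟨k, hxk, hyk⟩ :=
    hE x y ⟨χ i, hχ i (mem_image_of_mem f hx), hij ▸ hχ j (mem_image_of_mem f hy)⟩
  exact (hP.eq_of_mem hxk hx).symm.trans (hP.eq_of_mem hyk hy)

theorem leftInverse_of_image_subset (hP : IsBlockPartition B) {e : X ≃ X} {τ τ' : I → I}
    (h : ∀ i, e '' B i ⊆ B (τ i)) (h' : ∀ i, e.symm '' B i ⊆ B (τ' i)) : LeftInverse τ' τ := by
  intro i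
  obtain ⟨x, hx⟩ := hP.1 i
  have hex : e.symm (e x) ∈ B (τ' (τ i)) := h' _ (mem_image_of_mem _ (h i (mem_image_of_mem _ hx)))
  rw [e.symm_apply_apply] at hex
  exact hP.eq_of_mem hex hx

theorem exists_perm_image_eq (hP : IsBlockPartition B) {g : X ≃ X} (hg : Preserves B g)
    (hg' : Preserves B g.symm) : ∃ σ : I ≃ I, ∀ i, g '' B i = B (σ i) := by
  choose τ hτ using hg
  choose τ' hτ' using hg'
  have hleft : LeftInverse τ' τ := hP.leftInverse_of_image_subset hτ hτ'
  refine ⟨⟨τ, τ', hleft, hP.leftInverse_of_image_subset (e := g.symm) hτ' hτ⟩, fun i => ?_⟩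
  refine (hτ i).antisymm fun y hy => ⟨g.symm y, ?_, g.apply_symm_apply y⟩
  simpa only [hleft i] using hτ' _ (mem_image_of_mem _ hy)

theorem leftInverse_of_regular (hP : IsBlockPartition B) {f : X → X} {χ σ : I → I}
    (hχ : ∀ i, f '' B i ⊆ B (χ i)) (hinj : Injective χ) {g : X ≃ X}
    (hσ : ∀ i, g '' B i = B (σ i)) (hfgf : ∀ x, f (g (f x)) = f x) : LeftInverse σ χ := by
  intro i
  obtain ⟨x, hx⟩ := hP.1 i
  have hfx : f x ∈ B (χ i) := hχ i (mem_image_of_mem f hx)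
  have hfgfx : f (g (f x)) ∈ B (χ (σ (χ i))) :=
    hχ _ (mem_image_of_mem f (hσ _ ▸ mem_image_of_mem g hfx))
  rw [hfgf] at hfgfx
  exact hinj (hP.eq_of_mem hfgfx hfx)

theorem exists_equiv_of_blockEquiv (hP : IsBlockPartition B) {σ : I → I} (hσ : Bijective σ)
    (F : ∀ i, B i ≃ B (σ i)) :
    ∃ g : X ≃ X, Preserves B g ∧ Preserves B g.symm ∧ ∀ i (x : B i), g x = F i x := by
  let e : (Σ i, B i) ≃ X := Set.sigmaEquiv B hP.existsUnique_mem
  let g : X ≃ X := e.symm.trans ((Equiv.sigmaCongr (.ofBijective σ hσ) F).trans e)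
  have hgF : ∀ i (x : B i), g x = F i x := fun i x => by
    simp only [g, Equiv.trans_apply, show e.symm x = ⟨i, x⟩ from e.symm_apply_eq.2 rfl]
    rfl
  have hgF' : ∀ i (y : B (σ i)), g.symm y = (F i).symm y := fun i y => by
    rw [g.symm_apply_eq, hgF, Equiv.apply_symm_apply]
  refine ⟨g, fun i => ⟨σ i, ?_⟩, fun k => ⟨(Equiv.ofBijective σ hσ).symm k, ?_⟩, hgF⟩
  · rintro _ ⟨x, hx, rfl⟩
    exact hgF i ⟨x, hx⟩ ▸ (F i ⟨x, hx⟩).2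
  · rintro _ ⟨y, hy, rfl⟩
    rw [← Equiv.ofBijective_apply_symm_apply σ hσ k] at hy
    exact hgF' _ ⟨y, hy⟩ ▸ ((F _).symm ⟨y, hy⟩).2

end IsBlockPartition

section BlockMap

variable {X I : Type*} {B : I → Set X} {f : X → X}

theorem blockSemiBalanced_of_image_eq {g : X ≃ X} {i j : I} (hg : g '' B j = B i)
    (hf : f '' B i ⊆ B j) (hfgf : ∀ x, f (g (f x)) = f x) : BlockSemiBalanced B f i j := by
  refine ⟨g '' (f '' B i), (image_mono hf).trans hg.subset, fun x hx => ?_, ?_⟩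
  · refine ⟨g (f x), ⟨mem_image_of_mem _ (mem_image_of_mem _ hx), hfgf x⟩, ?_⟩
    rintro _ ⟨⟨_, ⟨x', -, rfl⟩, rfl⟩, hx'⟩
    rw [← hx', hfgf]
  · rw [← hg, ← image_sdiff g.injective, Cardinal.mk_image_eq g.injective]

/-- `F` maps a cross-section `T` of the kernel of `f` on `B i` onto `f '' B i` by `f`, and the
collapse `B i \ T` onto the defect `B j \ f '' B i`. -/
theorem BlockSemiBalanced.exists_equiv {i j : I} (h : BlockSemiBalanced B f i j)
    (hf : f '' B i ⊆ B j) :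
    ∃ F : B i ≃ B j, ∀ y : B j, (y : X) ∈ f '' B i → f (F.symm y) = y := by
  classical
  obtain ⟨T, hTB, hT, hcard⟩ := h
  have hbij : BijOn f T (f '' B i) := by
    refine ⟨fun t ht => mem_image_of_mem f (hTB ht), fun t ht t' ht' htt' => ?_, ?_⟩
    · exact (hT t (hTB ht)).unique ⟨ht, rfl⟩ ⟨ht', htt'.symm⟩
    · rintro _ ⟨x, hx, rfl⟩
      obtain ⟨t, ⟨ht, htx⟩, -⟩ := hT x hx
      exact ⟨t, ht, htx⟩
  let F : B i ≃ B j := (Equiv.Set.sumDiffSubset hTB).symm.trans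
    ((Equiv.sumCongr (hbij.equiv f) (Classical.choice (Cardinal.eq.mp hcard))).trans
      (Equiv.Set.sumDiffSubset hf))
  refine ⟨F, fun ⟨y, hy⟩ hyf => ?_⟩
  obtain ⟨x, hx, rfl⟩ := hyf
  obtain ⟨t, ⟨ht, htx⟩, -⟩ := hT x hx
  have hFt : F ⟨t, hTB ht⟩ = ⟨f x, hy⟩ := by
    simp only [F, Equiv.trans_apply]
    rw [Equiv.Set.sumDiffSubset_symm_apply_of_mem hTB ht]
    exact Subtype.ext htx
  rw [← F.eq_symm_apply] at hFt
  rw [← hFt]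
  exact htx

end BlockMap

/-- Characterization of unit-regular elements of `T_{E*}(X)`, the monoid of
self-maps with `(x,y) ∈ E ↔ (f x, f y) ∈ E` for the equivalence `E`
induced by the partition (units are those of `T(X,𝒫)`). -/
theorem stmt_17 {X I : Type*} (B : I → Set X) (hP : IsBlockPartition B)
    (f : X → X) (χf : I → I) (hχf : ∀ i, f '' B i ⊆ B (χf i))
    (hE : ∀ x y : X, (∃ i, x ∈ B i ∧ y ∈ B i) ↔ ∃ i, f x ∈ B i ∧ f y ∈ B i) :
    URegP B f ↔
      Function.Surjective χf ∧
        ∀ i, Cardinal.mk ↥(B i) = Cardinal.mk ↥(B (χf i)) ∧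
          BlockSemiBalanced B f i (χf i) := by
  have hinj : Injective χf := hP.injective_of_reflects hχf fun x y => (hE x y).2
  constructor
  · rintro ⟨g, hg, hg', hfgf⟩
    obtain ⟨σ, hσ⟩ := hP.exists_perm_image_eq hg hg'
    have hσχ : LeftInverse σ χf := hP.leftInverse_of_regular hχf hinj hσ hfgf
    have hgB : ∀ i, g '' B (χf i) = B i := fun i => (hσ _).trans (congrArg B (hσχ i))
    refine ⟨(hσχ.rightInverse_of_injective σ.injective).surjective, fun i => ⟨?_, ?_⟩⟩
    · rw [← hgB i, Cardinal.mk_image_eq g.injective]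
    · exact blockSemiBalanced_of_image_eq (hgB i) (hχf i) hfgf
  · rintro ⟨hsurj, hbal⟩
    choose F hF using fun i => (hbal i).2.exists_equiv (hχf i)
    obtain ⟨g, hg, hg', hgF⟩ := hP.exists_equiv_of_blockEquiv ⟨hinj, hsurj⟩ F
    refine ⟨g.symm, hg', hg, fun x => ?_⟩
    obtain ⟨i, hx⟩ := hP.2.2 x
    have hfx : f x ∈ B (χf i) := hχf i (mem_image_of_mem f hx)
    have hgfx : g.symm (f x) = (F i).symm ⟨f x, hfx⟩ := by
      rw [g.symm_apply_eq, hgF, Equiv.apply_symm_apply]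
    rw [hgfx]
    exact hF i ⟨f x, hfx⟩ (mem_image_of_mem f hx)
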